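/- arXiv:1512.02280 — 3 statements merged into one kernel-verified Lean document; each statement's English description precedes it below -/
import Mathlib

section
/- Let N be a binomial random variable with parameters (n, p). For every r ≥ 2 there exists a constant C_r depending only on r such that E[N^r · 1_{N ≥ 2}] ≤ C_r · max((np)^r, (np)^2). -/
open Finset Real
open scoped Nat

/-! With `x = np`, the binomial weights satisfy `C(n,k) p^k (1-p)^(n-k) ≤ x^k / k!`. For `x ≤ 1`
and `k ≥ 2` this is at most `2 x² 2^{-k}`, and for `k > 6x` it is at most `2^{-k}` because
`k^k / k! ≤ e^k`; in both cases the factor `k^r ≤ k^⌈r⌉` is absorbed by the convergent series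
`∑ k^⌈r⌉ 2^{-k}`. The terms with `k ≤ 6x` contribute at most `(6x)^r`, as the weights sum to `1`. -/

lemma pow_div_factorial_le_exp_one_mul_div_pow {x : ℝ} (hx : 0 ≤ x) (k : ℕ) :
    x ^ k / k ! ≤ (exp 1 * x / k) ^ k := by
  rcases k.eq_zero_or_pos with rfl | hk
  · simp
  have hk' : (0 : ℝ) < k := by exact_mod_cast hk
  have hexp : (k : ℝ) ^ k / k ! ≤ exp 1 ^ k := by
    rw [← exp_nat_mul, mul_one]; exact pow_div_factorial_le_exp _ hk'.le k
  calc x ^ k / k ! = (x / k) ^ k * ((k : ℝ) ^ k / k !) := by rw [div_pow]; field_simp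
    _ ≤ (x / k) ^ k * exp 1 ^ k := by gcongr
    _ = (exp 1 * x / k) ^ k := by rw [← mul_pow]; ring_nf

lemma pow_div_factorial_le_half_pow {x : ℝ} (hx : 0 ≤ x) {k : ℕ} (hk : 6 * x < k) :
    x ^ k / k ! ≤ (1 / 2) ^ k := by
  have hk' : (0 : ℝ) < k := by linarith
  refine (pow_div_factorial_le_exp_one_mul_div_pow hx k).trans
    (pow_le_pow_left₀ (by positivity) ?_ k)
  rw [div_le_iff₀ hk']
  nlinarith [exp_one_lt_d9]

lemma two_pow_le_two_mul_factorial (k : ℕ) : 2 ^ k ≤ 2 * k ! := by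
  cases k with
  | zero => simp
  | succ k =>
    have h := Nat.factorial_mul_pow_le_factorial (m := 1) (n := k)
    rw [Nat.factorial_one, one_mul, one_add_one_eq_two, add_comm] at h
    rw [pow_succ]
    omega

lemma pow_div_factorial_le_of_le_one {x : ℝ} (hx0 : 0 ≤ x) (hx1 : x ≤ 1) {k : ℕ} (hk : 2 ≤ k) :
    x ^ k / k ! ≤ 2 * x ^ 2 * (1 / 2) ^ k := by
  have hfact : (2 : ℝ) ^ k ≤ 2 * k ! := by exact_mod_cast two_pow_le_two_mul_factorial k
  rw [div_le_iff₀ (by positivity)]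
  calc x ^ k ≤ x ^ 2 := pow_le_pow_of_le_one hx0 hx1 hk
    _ = x ^ 2 * (1 / 2) ^ k * 2 ^ k := by rw [mul_assoc, ← mul_pow]; norm_num
    _ ≤ x ^ 2 * (1 / 2) ^ k * (2 * k !) := by gcongr
    _ = 2 * x ^ 2 * (1 / 2) ^ k * k ! := by ring

lemma rpow_le_pow_natCeil {k : ℕ} (hk : k ≠ 0) (r : ℝ) : (k : ℝ) ^ r ≤ (k : ℝ) ^ ⌈r⌉₊ := by
  rw [← rpow_natCast]
  exact rpow_le_rpow_of_exponent_le (by exact_mod_cast Nat.one_le_iff_ne_zero.mpr hk) (Nat.le_ceil r)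

noncomputable def powMulHalfPowSum (m : ℕ) : ℝ := ∑' k : ℕ, (k : ℝ) ^ m * (1 / 2) ^ k

lemma powMulHalfPowSum_nonneg (m : ℕ) : 0 ≤ powMulHalfPowSum m :=
  tsum_nonneg fun k ↦ by positivity

lemma sum_range_le_powMulHalfPowSum (m N : ℕ) :
    ∑ k ∈ range N, (k : ℝ) ^ m * (1 / 2) ^ k ≤ powMulHalfPowSum m :=
  (summable_pow_mul_geometric_of_norm_lt_one m (by norm_num)).sum_le_tsum _ fun k _ ↦ by positivity

def binomialWeight (n : ℕ) (p : ℝ) (k : ℕ) : ℝ := n.choose k * p ^ k * (1 - p) ^ (n - k)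

section binomialWeight

variable {n : ℕ} {p : ℝ}

lemma binomialWeight_nonneg (hp0 : 0 ≤ p) (hp1 : p ≤ 1) (k : ℕ) : 0 ≤ binomialWeight n p k := by
  have : 0 ≤ 1 - p := by linarith
  unfold binomialWeight; positivity

lemma sum_binomialWeight (n : ℕ) (p : ℝ) : ∑ k ∈ range (n + 1), binomialWeight n p k = 1 := by
  have h := add_pow p (1 - p) n
  rw [add_sub_cancel, one_pow] at h
  rw [h]
  exact sum_congr rfl fun k _ ↦ by unfold binomialWeight; ring

lemma binomialWeight_le (hp0 : 0 ≤ p) (hp1 : p ≤ 1) (k : ℕ) :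
    binomialWeight n p k ≤ (n * p) ^ k / k ! := by
  have hchoose : (n.choose k : ℝ) ≤ n ^ k / k ! := Nat.choose_le_pow_div k n
  calc binomialWeight n p k ≤ n.choose k * p ^ k * 1 := by
        unfold binomialWeight; gcongr; exact pow_le_one₀ (by linarith) (by linarith)
    _ ≤ n ^ k / k ! * p ^ k := by rw [mul_one]; gcongr
    _ = (n * p) ^ k / k ! := by ring

lemma binomialWeight_mul_rpow_le (hp0 : 0 ≤ p) (hp1 : p ≤ 1) {k : ℕ} (hk : k ≠ 0)
    (r : ℝ) : binomialWeight n p k * (k : ℝ) ^ r ≤ (n * p) ^ k / k ! * (k : ℝ) ^ ⌈r⌉₊ :=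
  mul_le_mul (binomialWeight_le hp0 hp1 k) (rpow_le_pow_natCeil hk r) (by positivity)
    (by positivity)

lemma sum_binomialWeight_mul_rpow_le_of_mul_le_one (hp0 : 0 ≤ p) (hp1 : p ≤ 1) (hx : n * p ≤ 1)
    (r : ℝ) :
    ∑ k ∈ range (n + 1), binomialWeight n p k * (if 2 ≤ k then (k : ℝ) ^ r else 0)
      ≤ 2 * (n * p) ^ 2 * powMulHalfPowSum ⌈r⌉₊ := by
  have hx0 : 0 ≤ (n : ℝ) * p := by positivity
  have hterm (k : ℕ) : binomialWeight n p k * (if 2 ≤ k then (k : ℝ) ^ r else 0)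
      ≤ 2 * (n * p) ^ 2 * ((k : ℝ) ^ ⌈r⌉₊ * (1 / 2) ^ k) := by
    split_ifs with hk
    · calc binomialWeight n p k * (k : ℝ) ^ r ≤ (n * p) ^ k / k ! * (k : ℝ) ^ ⌈r⌉₊ :=
            binomialWeight_mul_rpow_le hp0 hp1 (by omega) r
        _ ≤ 2 * (n * p) ^ 2 * (1 / 2) ^ k * (k : ℝ) ^ ⌈r⌉₊ := by
            gcongr; exact pow_div_factorial_le_of_le_one hx0 hx hk
        _ = _ := by ring
    · rw [mul_zero]; positivity
  calc _ ≤ ∑ k ∈ range (n + 1), 2 * (n * p) ^ 2 * ((k : ℝ) ^ ⌈r⌉₊ * (1 / 2) ^ k) :=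
        sum_le_sum fun k _ ↦ hterm k
    _ ≤ 2 * (n * p) ^ 2 * powMulHalfPowSum ⌈r⌉₊ := by
        rw [← mul_sum]; gcongr; exact sum_range_le_powMulHalfPowSum _ _

lemma sum_binomialWeight_mul_rpow_le (hp0 : 0 ≤ p) (hp1 : p ≤ 1) {r : ℝ} (hr : 0 ≤ r) :
    ∑ k ∈ range (n + 1), binomialWeight n p k * (if 2 ≤ k then (k : ℝ) ^ r else 0)
      ≤ (6 * (n * p)) ^ r + powMulHalfPowSum ⌈r⌉₊ := by
  have hx0 : 0 ≤ (n : ℝ) * p := by positivity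
  have hterm (k : ℕ) : binomialWeight n p k * (if 2 ≤ k then (k : ℝ) ^ r else 0)
      ≤ binomialWeight n p k * (6 * (n * p)) ^ r + (k : ℝ) ^ ⌈r⌉₊ * (1 / 2) ^ k := by
    have hw := binomialWeight_nonneg (n := n) hp0 hp1 k
    have hbulk : 0 ≤ binomialWeight n p k * (6 * (n * p)) ^ r := by positivity
    have htail : 0 ≤ (k : ℝ) ^ ⌈r⌉₊ * (1 / 2) ^ k := by positivity
    split_ifs with hk
    · rcases le_or_gt (k : ℝ) (6 * (n * p)) with hsmall | hlarge
      · have : binomialWeight n p k * (k : ℝ) ^ r ≤ binomialWeight n p k * (6 * (n * p)) ^ r := by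
          gcongr
        linarith
      · have : binomialWeight n p k * (k : ℝ) ^ r ≤ (k : ℝ) ^ ⌈r⌉₊ * (1 / 2) ^ k :=
          calc binomialWeight n p k * (k : ℝ) ^ r ≤ (n * p) ^ k / k ! * (k : ℝ) ^ ⌈r⌉₊ :=
                binomialWeight_mul_rpow_le hp0 hp1 (by omega) r
            _ ≤ (1 / 2) ^ k * (k : ℝ) ^ ⌈r⌉₊ := by
                gcongr; exact pow_div_factorial_le_half_pow hx0 hlarge
            _ = _ := mul_comm _ _
        linarith
    · linarith
  calc _ ≤ ∑ k ∈ range (n + 1),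
        (binomialWeight n p k * (6 * (n * p)) ^ r + (k : ℝ) ^ ⌈r⌉₊ * (1 / 2) ^ k) :=
        sum_le_sum fun k _ ↦ hterm k
    _ ≤ (6 * (n * p)) ^ r + powMulHalfPowSum ⌈r⌉₊ := by
        rw [sum_add_distrib, ← sum_mul, sum_binomialWeight, one_mul]
        gcongr; exact sum_range_le_powMulHalfPowSum _ _

end binomialWeight

/-- For a binomial random variable `N ~ Bin(n, p)` and every real `r ≥ 2`
there is a constant `C_r` (depending only on `r`) with
`E[N^r · 1_{N ≥ 2}] ≤ C_r · max((np)^r, (np)^2)`. -/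
theorem binomial_moment_bound (r : ℝ) (hr : 2 ≤ r) :
    ∃ C : ℝ, 0 < C ∧
      ∀ (n : ℕ) (p : ℝ), 0 ≤ p → p ≤ 1 →
        (∑ k ∈ Finset.range (n + 1),
            (n.choose k : ℝ) * p ^ k * (1 - p) ^ (n - k) *
              (if 2 ≤ k then (k : ℝ) ^ r else 0))
          ≤ C * max (((n : ℝ) * p) ^ r) (((n : ℝ) * p) ^ (2 : ℕ)) := by
  set B := powMulHalfPowSum ⌈r⌉₊
  have hB : 0 ≤ B := powMulHalfPowSum_nonneg _
  have h6r : 0 < (6 : ℝ) ^ r := by positivity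
  refine ⟨2 * B + 6 ^ r + 1, by positivity, fun n p hp0 hp1 ↦ ?_⟩
  have hx0 : 0 ≤ (n : ℝ) * p := by positivity
  rcases le_total ((n : ℝ) * p) 1 with hx | hx
  · calc _ ≤ 2 * (n * p) ^ 2 * B := sum_binomialWeight_mul_rpow_le_of_mul_le_one hp0 hp1 hx r
      _ ≤ (2 * B + 6 ^ r + 1) * ((n : ℝ) * p) ^ 2 := by nlinarith
      _ ≤ _ := by gcongr; exact le_max_right _ _
  · have hxr : 1 ≤ ((n : ℝ) * p) ^ r := one_le_rpow hx (by linarith)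
    calc _ ≤ (6 * (n * p)) ^ r + B := sum_binomialWeight_mul_rpow_le hp0 hp1 (by linarith)
      _ = 6 ^ r * ((n : ℝ) * p) ^ r + B := by rw [mul_rpow (by norm_num) hx0]
      _ ≤ (2 * B + 6 ^ r + 1) * ((n : ℝ) * p) ^ r := by nlinarith
      _ ≤ _ := by gcongr; exact le_max_left _ _
end

section
/- For each n let N_n be multinomially distributed with parameters (n, p_{n,1},…,p_{n,M_n}) with max_m p_{n,m} → 0 and liminf_n n·min_m p_{n,m} > 0. For numbers α_{n,m}, define s_n² = (2/n²) Σ_m α_{n,m}²/p_{n,m}² + (4/n) Σ_m p_{n,m} (α_{n,m}/p_{n,m} − Σ_m α_{n,m})². Then Σ_m α_{n,m}( N_{n,m}(N_{n,m}−1)/(n(n−1)p_{n,m}²) − 1 ) = O_P( s_n + n^{−1/2} Σ_m |α_{n,m}| ). -/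
open MeasureTheory ProbabilityTheory Filter

/-!
With `J_r` the category of the `r`-th trial, `N_m (N_m - 1)` counts the ordered pairs `r ≠ r'`
with `J_r = J_{r'} = m`, so the statistic equals
`(n (n - 1))⁻¹ Σ_{r ≠ r'} (K (J_r) (J_{r'}) - Σ_m α_m)` with `K i j = [i = j] α_i / p_i²`:
a centred U-statistic of order two. Its Hoeffding decomposition
`K i j - Σ α = H i j + g i + g j`, with `g i = α_i / p_i - Σ α` and `H` degenerate
(`Σ_i p_i H i j = 0`), makes the terms `H (J_r) (J_{r'})` of different unordered pairs orthogonal.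
Hence the second moment of the statistic is at most `4 s_n²`, and Chebyshev's inequality gives the
rate with `B = √(4 / ε)`.
-/

lemma Finset.cast_card_univ_offDiag {ι : Type*} [Fintype ι] [DecidableEq ι] :
    ((Finset.univ : Finset ι).offDiag.card : ℝ) =
      (Fintype.card ι : ℝ) * ((Fintype.card ι : ℝ) - 1) := by
  rw [Finset.offDiag_card, Finset.card_univ, Nat.cast_sub (Nat.le_mul_self _)]
  push_cast
  ring

lemma Finset.sum_offDiag_eq_sum_sum_sub {ι M : Type*} [DecidableEq ι] [AddCommGroup M]
    (s : Finset ι) (g : ι × ι → M) :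
    ∑ x ∈ s.offDiag, g x = ∑ r ∈ s, ∑ r' ∈ s, g (r, r') - ∑ r ∈ s, g (r, r) := by
  rw [← Finset.sum_product', ← Finset.diag_union_offDiag,
    Finset.sum_union (Finset.disjoint_diag_offDiag _), Finset.sum_diag, add_sub_cancel_left]

lemma Finset.sum_univ_offDiag_add {ι : Type*} [Fintype ι] [DecidableEq ι] (f : ι → ℝ) :
    ∑ x ∈ (Finset.univ : Finset ι).offDiag, (f x.1 + f x.2) =
      2 * ((Fintype.card ι : ℝ) - 1) * ∑ r, f r := by
  simp only [Finset.sum_offDiag_eq_sum_sum_sub, Finset.sum_add_distrib, Finset.sum_const,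
    Finset.card_univ, nsmul_eq_mul, ← Finset.mul_sum]
  ring

lemma Fintype.sum_comp_eq_sum_card_filter_mul {ι κ : Type*} [Fintype ι] [Fintype κ]
    [DecidableEq κ] (v : ι → κ) (h : κ → ℝ) :
    ∑ r, h (v r) = ∑ m, ((Finset.univ.filter fun r => v r = m).card : ℝ) * h m := by
  rw [← Finset.sum_fiberwise' Finset.univ v h]
  simp only [Finset.sum_const, nsmul_eq_mul]

section Hoeffding

variable {κ : Type*} [Fintype κ] (q : κ → ℝ) (A : κ → κ → ℝ)

def hoeffdingProj (i : κ) : ℝ := ∑ j, q j * A i j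

def hoeffdingMean : ℝ := ∑ i, q i * hoeffdingProj q A i

def hoeffdingRem (i j : κ) : ℝ :=
  A i j - hoeffdingProj q A i - hoeffdingProj q A j + hoeffdingMean q A

variable {q A}

lemma sum_mul_hoeffdingProj_sub_mean (hq : ∑ m, q m = 1) :
    ∑ i, q i * (hoeffdingProj q A i - hoeffdingMean q A) = 0 := by
  simp only [mul_sub, Finset.sum_sub_distrib, ← Finset.sum_mul, hq, one_mul, hoeffdingMean]
  ring

lemma sum_mul_hoeffdingRem_right (hq : ∑ m, q m = 1) (i : κ) :
    ∑ j, q j * hoeffdingRem q A i j = 0 := by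
  simp only [hoeffdingRem, mul_add, mul_sub, Finset.sum_add_distrib, Finset.sum_sub_distrib,
    ← Finset.sum_mul, hq, one_mul]
  simp only [hoeffdingProj, hoeffdingMean]
  ring

lemma hoeffdingRem_comm (hA : ∀ i j, A i j = A j i) (i j : κ) :
    hoeffdingRem q A i j = hoeffdingRem q A j i := by
  simp only [hoeffdingRem, hA i j]
  ring

lemma sum_mul_hoeffdingRem_left (hq : ∑ m, q m = 1) (hA : ∀ i j, A i j = A j i) (j : κ) :
    ∑ i, q i * hoeffdingRem q A i j = 0 := by
  simp only [hoeffdingRem_comm hA _ j]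
  exact sum_mul_hoeffdingRem_right hq j

lemma sum_sum_mul_hoeffdingRem_mul_add (hq : ∑ m, q m = 1) (hA : ∀ i j, A i j = A j i)
    (u v : κ → ℝ) :
    ∑ i, ∑ j, q i * q j * hoeffdingRem q A i j * (u i + v j) = 0 := by
  have hu : ∑ i, ∑ j, q i * q j * hoeffdingRem q A i j * u i =
      ∑ i, q i * u i * ∑ j, q j * hoeffdingRem q A i j := by
    simp only [Finset.mul_sum]; congr! 2; ring
  have hv : ∑ i, ∑ j, q i * q j * hoeffdingRem q A i j * v j =
      ∑ j, q j * v j * ∑ i, q i * hoeffdingRem q A i j := by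
    rw [Finset.sum_comm]; simp only [Finset.mul_sum]; congr! 2; ring
  simp only [mul_add, Finset.sum_add_distrib, hu, hv, sum_mul_hoeffdingRem_right hq,
    sum_mul_hoeffdingRem_left hq hA, mul_zero, Finset.sum_const_zero, add_zero]

lemma sum_sum_mul_hoeffdingRem_sq_le (hq0 : ∀ m, 0 ≤ q m) (hq : ∑ m, q m = 1)
    (hA : ∀ i j, A i j = A j i) :
    ∑ i, ∑ j, q i * q j * hoeffdingRem q A i j ^ 2 ≤ ∑ i, ∑ j, q i * q j * A i j ^ 2 := by
  set u := hoeffdingProj q A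
  set v := fun j => hoeffdingProj q A j - hoeffdingMean q A
  have hA_eq : ∀ i j, A i j = hoeffdingRem q A i j + (u i + v j) := by
    intro i j; simp only [hoeffdingRem, u, v]; ring
  -- `A = hoeffdingRem q A + (u i + v j)` is an orthogonal decomposition in `L²(q ⊗ q)`.
  have horth := sum_sum_mul_hoeffdingRem_mul_add hq hA u v
  have hexp : ∑ i, ∑ j, q i * q j * A i j ^ 2 =
      ∑ i, ∑ j, q i * q j * hoeffdingRem q A i j ^ 2 +
        2 * ∑ i, ∑ j, q i * q j * hoeffdingRem q A i j * (u i + v j) +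
        ∑ i, ∑ j, q i * q j * (u i + v j) ^ 2 := by
    simp only [Finset.mul_sum, ← Finset.sum_add_distrib]
    congr! 2 with i _ j _
    rw [hA_eq i j]; ring
  have hnonneg : 0 ≤ ∑ i, ∑ j, q i * q j * (u i + v j) ^ 2 := by
    exact Finset.sum_nonneg fun i _ => Finset.sum_nonneg fun j _ =>
      mul_nonneg (mul_nonneg (hq0 i) (hq0 j)) (sq_nonneg _)
  linarith

end Hoeffding

lemma integral_sum_sq_eq_sum_sum {Ω α : Type*} [MeasurableSpace Ω] {P : Measure Ω}
    (s : Finset α) {X : α → Ω → ℝ}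
    (hX : ∀ a ∈ s, ∀ b ∈ s, Integrable (fun ω => X a ω * X b ω) P) :
    ∫ ω, (∑ a ∈ s, X a ω) ^ 2 ∂P = ∑ a ∈ s, ∑ b ∈ s, ∫ ω, X a ω * X b ω ∂P := by
  simp_rw [sq, Finset.sum_mul_sum]
  rw [integral_finsetSum _ fun a ha => integrable_finsetSum _ fun b hb => hX a ha b hb]
  exact Finset.sum_congr rfl fun a ha => integral_finsetSum _ fun b hb => hX a ha b hb

section FiniteValued

variable {Ω β κ : Type*} [MeasurableSpace Ω] {P : Measure Ω} [IsProbabilityMeasure P]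
  [MeasurableSpace β] [MeasurableSingletonClass β]
  [Fintype κ] [MeasurableSpace κ] [MeasurableSingletonClass κ]

lemma integral_comp_eq_sum {Y : Ω → κ} (hY : Measurable Y) {q : κ → ℝ} (hq : ∀ m, 0 ≤ q m)
    (hlaw : ∀ m, P {ω | Y ω = m} = ENNReal.ofReal (q m)) (f : κ → ℝ) :
    ∫ ω, f (Y ω) ∂P = ∑ m, q m * f m := by
  rw [← integral_map hY.aemeasurable (measurable_of_countable f).aestronglyMeasurable,
    integral_fintype Integrable.of_finite]
  refine Finset.sum_congr rfl fun m _ => ?_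
  rw [measureReal_def, Measure.map_apply hY (measurableSet_singleton m), smul_eq_mul,
    Set.preimage]
  simp only [Set.mem_singleton_iff]
  rw [hlaw, ENNReal.toReal_ofReal (hq m)]

lemma ProbabilityTheory.IndepFun.integral_comp_eq_integral_sum [Finite β] {X : Ω → β}
    {Y : Ω → κ} (hXY : IndepFun X Y P) (hX : Measurable X) (hY : Measurable Y) {q : κ → ℝ}
    (hq : ∀ m, 0 ≤ q m) (hlaw : ∀ m, P {ω | Y ω = m} = ENNReal.ofReal (q m))
    (G : β → κ → ℝ) :
    ∫ ω, G (X ω) (Y ω) ∂P = ∫ ω, ∑ m, q m * G (X ω) m ∂P := by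
  have hprod := (indepFun_iff_map_prod_eq_prod_map_map hX.aemeasurable hY.aemeasurable).1 hXY
  calc ∫ ω, G (X ω) (Y ω) ∂P = ∫ z, G z.1 z.2 ∂(P.map X).prod (P.map Y) := by
        rw [← hprod, integral_map (hX.prodMk hY).aemeasurable
          (measurable_of_countable _).aestronglyMeasurable]
    _ = ∫ x, ∫ m, G x m ∂(P.map Y) ∂(P.map X) := integral_prod _ Integrable.of_finite
    _ = ∫ x, ∑ m, q m * G x m ∂(P.map X) := by
        congr 1; funext x
        rw [integral_map hY.aemeasurable (measurable_of_countable _).aestronglyMeasurable]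
        exact integral_comp_eq_sum hY hq hlaw (G x)
    _ = ∫ ω, ∑ m, q m * G (X ω) m ∂P :=
        integral_map hX.aemeasurable (measurable_of_countable _).aestronglyMeasurable

end FiniteValued

structure IsIIDSample {Ω ι κ : Type*} [MeasurableSpace Ω] [MeasurableSpace κ] (P : Measure Ω)
    (J : ι → Ω → κ) (q : κ → ℝ) : Prop where
  measurable : ∀ r, Measurable (J r)
  indep : iIndepFun J P
  law : ∀ r m, P {ω | J r ω = m} = ENNReal.ofReal (q m)
  nonneg : ∀ m, 0 ≤ q m

namespace IsIIDSample

variable {Ω ι κ : Type*} [MeasurableSpace Ω] {P : Measure Ω} [IsProbabilityMeasure P]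
  [Fintype κ] [MeasurableSpace κ] [MeasurableSingletonClass κ]
  {J : ι → Ω → κ} {q : κ → ℝ}

lemma integral_comp_apply (hJ : IsIIDSample P J q) (r : ι) (f : κ → ℝ) :
    ∫ ω, f (J r ω) ∂P = ∑ m, q m * f m :=
  integral_comp_eq_sum (hJ.measurable r) hJ.nonneg (hJ.law r) f

lemma integrable_comp [Finite ι] (hJ : IsIIDSample P J q) (F : (ι → κ) → ℝ) :
    Integrable (fun ω => F (fun r => J r ω)) P :=
  Integrable.of_finite.comp_measurable (measurable_pi_lambda _ hJ.measurable)

variable [Fintype ι] [DecidableEq ι]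

lemma integral_eq_integral_sum_update (hJ : IsIIDSample P J q) (s : ι) (F : (ι → κ) → ℝ) :
    ∫ ω, F (fun r => J r ω) ∂P =
      ∫ ω, ∑ m, q m * F (Function.update (fun r => J r ω) s m) ∂P := by
  have hdisj : Disjoint ({s}ᶜ : Finset ι) {s} := disjoint_compl_left
  have hind := (hJ.indep.indepFun_finset _ _ hdisj hJ.measurable).comp measurable_id
    (measurable_pi_apply (⟨s, Finset.mem_singleton_self s⟩ : ({s} : Finset ι)))
  let G : (({s}ᶜ : Finset ι) → κ) → κ → ℝ := fun x m =>
    F fun r => if h : r = s then m else x ⟨r, by simpa using h⟩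
  have hG : ∀ ω m, G (fun r : ({s}ᶜ : Finset ι) => J r ω) m =
      F (Function.update (fun r => J r ω) s m) := by
    intro ω m
    show F _ = F _
    congr 1; funext r
    by_cases h : r = s
    · subst h; simp
    · simp [h]
  have := hind.integral_comp_eq_integral_sum (measurable_pi_lambda _ fun r => hJ.measurable r)
    (hJ.measurable s) hJ.nonneg (hJ.law s) G
  simp only [Function.comp_def, id, hG] at this
  simpa [Function.update_eq_self] using this

lemma integral_comp_apply₂ (hJ : IsIIDSample P J q) {a b : ι} (hab : a ≠ b) (F : κ → κ → ℝ) :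
    ∫ ω, F (J a ω) (J b ω) ∂P = ∑ i, ∑ j, q i * q j * F i j := by
  rw [hJ.integral_eq_integral_sum_update b (fun v => F (v a) (v b))]
  simp only [Function.update_self, Function.update_of_ne hab]
  rw [hJ.integral_comp_apply a (fun i => ∑ j, q j * F i j)]
  simp only [Finset.mul_sum, mul_assoc]

lemma integral_mul_eq_zero_of_degenerate (hJ : IsIIDSample P J q) {H : κ → κ → ℝ}
    (hH : ∀ j, ∑ i, q i * H i j = 0) {a b c d : ι} (hca : c ≠ a) (hcb : c ≠ b) (hcd : c ≠ d) :
    ∫ ω, H (J a ω) (J b ω) * H (J c ω) (J d ω) ∂P = 0 := by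
  rw [hJ.integral_eq_integral_sum_update c fun v => H (v a) (v b) * H (v c) (v d)]
  simp only [Function.update_self, Function.update_of_ne hca.symm, Function.update_of_ne hcb.symm,
    Function.update_of_ne hcd.symm]
  simp only [mul_left_comm _ (H _ _), ← Finset.mul_sum, hH, mul_zero, integral_zero]

lemma integral_hoeffdingRem_mul_eq_zero (hJ : IsIIDSample P J q) (hq : ∑ m, q m = 1)
    {A : κ → κ → ℝ} (hA : ∀ i j, A i j = A j i) {x y : ι × ι} (hy : y.1 ≠ y.2)
    (hyx : y ≠ x) (hyx' : y ≠ x.swap) :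
    ∫ ω, hoeffdingRem q A (J x.1 ω) (J x.2 ω) * hoeffdingRem q A (J y.1 ω) (J y.2 ω) ∂P = 0 := by
  obtain ⟨a, b⟩ := x
  obtain ⟨c, d⟩ := y
  simp only [ne_eq, Prod.mk.injEq, Prod.swap_prod_mk, not_and] at hy hyx hyx' ⊢
  have hH := sum_mul_hoeffdingRem_left hq hA
  -- Unless `{c, d} = {a, b}`, one of `c, d` occurs only once; integrating it out gives `0`.
  by_cases hc : c ≠ a ∧ c ≠ b
  · exact hJ.integral_mul_eq_zero_of_degenerate hH hc.1 hc.2 hy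
  have hd : d ≠ a ∧ d ≠ b := by
    constructor <;> rintro rfl <;> grind
  simp only [hoeffdingRem_comm hA _ (J d _)]
  exact hJ.integral_mul_eq_zero_of_degenerate hH hd.1 hd.2 (Ne.symm hy)

lemma integral_sq_sum_offDiag_hoeffdingRem (hJ : IsIIDSample P J q) (hq : ∑ m, q m = 1)
    {A : κ → κ → ℝ} (hA : ∀ i j, A i j = A j i) :
    ∫ ω, (∑ x ∈ (Finset.univ : Finset ι).offDiag,
        hoeffdingRem q A (J x.1 ω) (J x.2 ω)) ^ 2 ∂P =
      2 * (Fintype.card ι : ℝ) * ((Fintype.card ι : ℝ) - 1) *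
        ∑ i, ∑ j, q i * q j * hoeffdingRem q A i j ^ 2 := by
  set H := hoeffdingRem q A
  set D := (Finset.univ : Finset ι).offDiag
  have hrow : ∀ x ∈ D, ∑ y ∈ D, ∫ ω, H (J x.1 ω) (J x.2 ω) * H (J y.1 ω) (J y.2 ω) ∂P =
      2 * ∑ i, ∑ j, q i * q j * H i j ^ 2 := by
    intro x hx
    have hx' : x.1 ≠ x.2 := (Finset.mem_offDiag.1 hx).2.2
    rw [Finset.sum_eq_add_of_mem x x.swap hx
      (Finset.mem_offDiag.2 ⟨Finset.mem_univ _, Finset.mem_univ _, hx'.symm⟩)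
      (fun h => hx' (congrArg Prod.fst h)) fun y hy hyx => hJ.integral_hoeffdingRem_mul_eq_zero
        hq hA (Finset.mem_offDiag.1 hy).2.2 hyx.1 hyx.2,
      Prod.fst_swap, Prod.snd_swap, hJ.integral_comp_apply₂ hx' fun i j => H i j * H i j,
      hJ.integral_comp_apply₂ hx' fun i j => H i j * H j i]
    simp only [H, hoeffdingRem_comm hA _ _, sq]
    ring
  rw [integral_sum_sq_eq_sum_sum D fun x _ y _ =>
      hJ.integrable_comp fun v => H (v x.1) (v x.2) * H (v y.1) (v y.2),
    Finset.sum_congr rfl hrow, Finset.sum_const, nsmul_eq_mul, Finset.cast_card_univ_offDiag]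
  ring

lemma integral_sq_sum_comp (hJ : IsIIDSample P J q) {f : κ → ℝ} (hf : ∑ m, q m * f m = 0) :
    ∫ ω, (∑ r, f (J r ω)) ^ 2 ∂P = (Fintype.card ι : ℝ) * ∑ m, q m * f m ^ 2 := by
  rw [integral_sum_sq_eq_sum_sum _ fun r _ s _ => hJ.integrable_comp fun v => f (v r) * f (v s)]
  have hrow : ∀ r, ∑ s, ∫ ω, f (J r ω) * f (J s ω) ∂P = ∑ m, q m * f m ^ 2 := by
    intro r
    rw [Finset.sum_eq_single r]
    · rw [hJ.integral_comp_apply r fun m => f m * f m]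
      simp only [sq]
    · intro s _ hsr
      rw [hJ.integral_comp_apply₂ hsr.symm fun i j => f i * f j]
      calc ∑ i, ∑ j, q i * q j * (f i * f j) = (∑ i, q i * f i) * ∑ j, q j * f j := by
            rw [Finset.sum_mul_sum]; congr! 2; ring
        _ = 0 := by rw [hf, zero_mul]
    · simp
  simp only [hrow, Finset.sum_const, Finset.card_univ, nsmul_eq_mul]

lemma integral_sq_sum_offDiag_sub_hoeffdingMean_le (hJ : IsIIDSample P J q)
    (hq : ∑ m, q m = 1) {A : κ → κ → ℝ} (hA : ∀ i j, A i j = A j i) :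
    ∫ ω, (∑ x ∈ (Finset.univ : Finset ι).offDiag,
        (A (J x.1 ω) (J x.2 ω) - hoeffdingMean q A)) ^ 2 ∂P ≤
      4 * (Fintype.card ι : ℝ) * ((Fintype.card ι : ℝ) - 1) * ∑ i, ∑ j, q i * q j * A i j ^ 2 +
        8 * (Fintype.card ι : ℝ) * ((Fintype.card ι : ℝ) - 1) ^ 2 *
          ∑ i, q i * (hoeffdingProj q A i - hoeffdingMean q A) ^ 2 := by
  set n : ℝ := (Fintype.card ι : ℝ)
  set D := (Finset.univ : Finset ι).offDiag
  set H := hoeffdingRem q A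
  set g := fun i => hoeffdingProj q A i - hoeffdingMean q A
  have hdecomp : ∀ ω, ∑ x ∈ D, (A (J x.1 ω) (J x.2 ω) - hoeffdingMean q A) =
      ∑ x ∈ D, H (J x.1 ω) (J x.2 ω) + 2 * (n - 1) * ∑ r, g (J r ω) := by
    intro ω
    rw [← Finset.sum_univ_offDiag_add, ← Finset.sum_add_distrib]
    refine Finset.sum_congr rfl fun x _ => ?_
    simp only [H, g, hoeffdingRem]
    ring
  have hpt : ∀ ω, (∑ x ∈ D, (A (J x.1 ω) (J x.2 ω) - hoeffdingMean q A)) ^ 2 ≤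
      2 * (∑ x ∈ D, H (J x.1 ω) (J x.2 ω)) ^ 2 + 8 * (n - 1) ^ 2 * (∑ r, g (J r ω)) ^ 2 := by
    intro ω
    rw [hdecomp]
    nlinarith [sq_nonneg (∑ x ∈ D, H (J x.1 ω) (J x.2 ω) - 2 * (n - 1) * ∑ r, g (J r ω))]
  have hn : 0 ≤ n * (n - 1) := by
    rw [← Finset.cast_card_univ_offDiag]; positivity
  have hW : n * (n - 1) * ∑ i, ∑ j, q i * q j * H i j ^ 2 ≤
      n * (n - 1) * ∑ i, ∑ j, q i * q j * A i j ^ 2 :=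
    mul_le_mul_of_nonneg_left (sum_sum_mul_hoeffdingRem_sq_le hJ.nonneg hq hA) hn
  have hintH := hJ.integrable_comp fun v => 2 * (∑ x ∈ D, H (v x.1) (v x.2)) ^ 2
  have hintg := hJ.integrable_comp fun v => 8 * (n - 1) ^ 2 * (∑ r, g (v r)) ^ 2
  calc _ ≤ ∫ ω, (2 * (∑ x ∈ D, H (J x.1 ω) (J x.2 ω)) ^ 2 +
          8 * (n - 1) ^ 2 * (∑ r, g (J r ω)) ^ 2) ∂P :=
        integral_mono (hJ.integrable_comp fun v =>
            (∑ x ∈ D, (A (v x.1) (v x.2) - hoeffdingMean q A)) ^ 2)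
          (hintH.add hintg) hpt
    _ = 2 * (2 * n * (n - 1) * ∑ i, ∑ j, q i * q j * H i j ^ 2) +
          8 * (n - 1) ^ 2 * (n * ∑ i, q i * g i ^ 2) := by
        rw [integral_add hintH hintg, integral_const_mul, integral_const_mul,
          hJ.integral_sq_sum_offDiag_hoeffdingRem hq hA,
          hJ.integral_sq_sum_comp (sum_mul_hoeffdingProj_sub_mean hq)]
    _ ≤ _ := by linarith

end IsIIDSample

section Multinomial

variable {ι κ : Type*} [Fintype ι] [DecidableEq ι] [Fintype κ] [DecidableEq κ]

noncomputable def multinomialKernel (q α : κ → ℝ) (i j : κ) : ℝ :=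
  if i = j then α i / q i ^ 2 else 0

noncomputable def multinomialStat (q α : κ → ℝ) (v : ι → κ) : ℝ :=
  ∑ m, α m * (((Finset.univ.filter fun r => v r = m).card : ℝ) *
    (((Finset.univ.filter fun r => v r = m).card : ℝ) - 1) /
      ((Fintype.card ι : ℝ) * ((Fintype.card ι : ℝ) - 1) * q m ^ 2) - 1)

variable {q : κ → ℝ} (α : κ → ℝ)

omit [Fintype κ] in
lemma multinomialKernel_self (i : κ) : multinomialKernel q α i i = α i / q i ^ 2 := if_pos rfl

omit [Fintype κ] in
lemma multinomialKernel_comm (i j : κ) :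
    multinomialKernel q α i j = multinomialKernel q α j i := by
  by_cases h : i = j
  · rw [h]
  · simp [multinomialKernel, h, Ne.symm h]

lemma hoeffdingProj_multinomialKernel (hq : ∀ m, q m ≠ 0) (i : κ) :
    hoeffdingProj q (multinomialKernel q α) i = α i / q i := by
  simp only [hoeffdingProj, multinomialKernel, mul_ite, mul_zero, Finset.sum_ite_eq,
    Finset.mem_univ, if_true]
  field_simp [hq i]

lemma hoeffdingMean_multinomialKernel (hq : ∀ m, q m ≠ 0) :
    hoeffdingMean q (multinomialKernel q α) = ∑ m, α m := by
  simp only [hoeffdingMean, hoeffdingProj_multinomialKernel α hq]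
  exact Finset.sum_congr rfl fun m _ => by field_simp [hq m]

lemma sum_sum_mul_multinomialKernel_sq (hq : ∀ m, q m ≠ 0) :
    ∑ i, ∑ j, q i * q j * multinomialKernel q α i j ^ 2 = ∑ m, α m ^ 2 / q m ^ 2 := by
  refine Finset.sum_congr rfl fun i _ => ?_
  rw [Finset.sum_eq_single i (fun j _ hji => by simp [multinomialKernel, Ne.symm hji])
    (by simp), multinomialKernel_self]
  field_simp [hq i]

lemma sum_offDiag_multinomialKernel (v : ι → κ) :
    ∑ x ∈ (Finset.univ : Finset ι).offDiag, multinomialKernel q α (v x.1) (v x.2) =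
      ∑ m, α m / q m ^ 2 * (((Finset.univ.filter fun r => v r = m).card : ℝ) *
        (((Finset.univ.filter fun r => v r = m).card : ℝ) - 1)) := by
  set c : κ → ℝ := fun m => ((Finset.univ.filter fun r => v r = m).card : ℝ)
  have hrow : ∀ r, ∑ r', multinomialKernel q α (v r) (v r') =
      c (v r) * (α (v r) / q (v r) ^ 2) := by
    intro r
    rw [Fintype.sum_comp_eq_sum_card_filter_mul v (multinomialKernel q α (v r))]
    simp [multinomialKernel, c]
  rw [Finset.sum_offDiag_eq_sum_sum_sub]
  simp only [hrow]
  rw [Fintype.sum_comp_eq_sum_card_filter_mul v fun m => c m * (α m / q m ^ 2),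
    Fintype.sum_comp_eq_sum_card_filter_mul v fun m => multinomialKernel q α m m,
    ← Finset.sum_sub_distrib]
  refine Finset.sum_congr rfl fun m _ => ?_
  simp only [multinomialKernel_self, c]
  ring

lemma multinomialStat_eq_sum_offDiag (hq : ∀ m, q m ≠ 0)
    (hn : (Fintype.card ι : ℝ) * ((Fintype.card ι : ℝ) - 1) ≠ 0) (v : ι → κ) :
    multinomialStat q α v = ((Fintype.card ι : ℝ) * ((Fintype.card ι : ℝ) - 1))⁻¹ *
      ∑ x ∈ (Finset.univ : Finset ι).offDiag,
        (multinomialKernel q α (v x.1) (v x.2) - ∑ m, α m) := by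
  rw [multinomialStat]
  set n : ℝ := (Fintype.card ι : ℝ)
  rw [Finset.sum_sub_distrib, sum_offDiag_multinomialKernel, Finset.sum_const,
    nsmul_eq_mul, Finset.cast_card_univ_offDiag, mul_sub (n * (n - 1))⁻¹,
    inv_mul_cancel_left₀ hn, Finset.mul_sum, ← Finset.sum_sub_distrib]
  refine Finset.sum_congr rfl fun m _ => ?_
  field_simp [hq m]

end Multinomial

lemma IsIIDSample.integral_multinomialStat_sq_le {Ω ι κ : Type*} [MeasurableSpace Ω]
    {P : Measure Ω} [IsProbabilityMeasure P] [Fintype ι] [DecidableEq ι] [Fintype κ]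
    [DecidableEq κ] [MeasurableSpace κ] [MeasurableSingletonClass κ] {J : ι → Ω → κ}
    {q : κ → ℝ} (hJ : IsIIDSample P J q) (hq : ∀ m, 0 < q m) (hq1 : ∑ m, q m = 1)
    (hn : 2 ≤ Fintype.card ι) (α : κ → ℝ) :
    ∫ ω, multinomialStat q α (fun r => J r ω) ^ 2 ∂P ≤
      4 * (2 / (Fintype.card ι : ℝ) ^ 2 * ∑ m, α m ^ 2 / q m ^ 2 +
        4 / (Fintype.card ι : ℝ) * ∑ m, q m * (α m / q m - ∑ m', α m') ^ 2) := by
  have hq0 : ∀ m, q m ≠ 0 := fun m => (hq m).ne'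
  have hn2 : (2 : ℝ) ≤ Fintype.card ι := by exact_mod_cast hn
  have hnn : 0 < (Fintype.card ι : ℝ) * ((Fintype.card ι : ℝ) - 1) := by nlinarith
  have hU := hJ.integral_sq_sum_offDiag_sub_hoeffdingMean_le hq1 (multinomialKernel_comm (q := q) α)
  rw [sum_sum_mul_multinomialKernel_sq α hq0, hoeffdingMean_multinomialKernel α hq0] at hU
  simp only [hoeffdingProj_multinomialKernel α hq0] at hU
  simp_rw [multinomialStat_eq_sum_offDiag α hq0 hnn.ne', mul_pow]
  rw [integral_const_mul]
  set n : ℝ := (Fintype.card ι : ℝ)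
  set Sa := ∑ m, α m ^ 2 / q m ^ 2
  set V := ∑ m, q m * (α m / q m - ∑ m', α m') ^ 2
  have hSa : 0 ≤ Sa := Finset.sum_nonneg fun m _ => by positivity
  have hV : 0 ≤ V := Finset.sum_nonneg fun m _ => mul_nonneg (hq m).le (sq_nonneg _)
  have hSa_le : 4 * Sa / (n * (n - 1)) ≤ 8 * Sa / n ^ 2 := by
    rw [div_le_div_iff₀ hnn (by positivity)]
    nlinarith [mul_nonneg (mul_nonneg hSa (by linarith : (0 : ℝ) ≤ n)) (by linarith : 0 ≤ n - 2)]
  have hV_le : 8 * V / n ≤ 16 * V / n := by gcongr; linarith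
  calc (n * (n - 1))⁻¹ ^ 2 * ∫ ω, (∑ x ∈ Finset.univ.offDiag,
          (multinomialKernel q α (J x.1 ω) (J x.2 ω) - ∑ m, α m)) ^ 2 ∂P
      ≤ (n * (n - 1))⁻¹ ^ 2 * (4 * n * (n - 1) * Sa + 8 * n * (n - 1) ^ 2 * V) :=
        mul_le_mul_of_nonneg_left hU (sq_nonneg _)
    _ = 4 * Sa / (n * (n - 1)) + 8 * V / n := by
        have hn0 : n ≠ 0 := by linarith
        have hn1 : n - 1 ≠ 0 := by linarith
        field_simp
    _ ≤ 4 * (2 / n ^ 2 * Sa + 4 / n * V) := by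
        have : 4 * (2 / n ^ 2 * Sa + 4 / n * V) = 8 * Sa / n ^ 2 + 16 * V / n := by ring
        linarith

lemma measure_mul_sqrt_lt_abs_le_of_integral_sq_le {Ω : Type*} [MeasurableSpace Ω]
    {P : Measure Ω} [IsFiniteMeasure P] {X : Ω → ℝ} (hX : Integrable (fun ω => X ω ^ 2) P)
    {c v B : ℝ} (hc : 0 ≤ c) (hB : 0 < B) (h : ∫ ω, X ω ^ 2 ∂P ≤ c * v) :
    P {ω | B * Real.sqrt v < |X ω|} ≤ ENNReal.ofReal (c / B ^ 2) := by
  rcases le_or_gt v 0 with hv | hv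
  · have h0 : ∫ ω, X ω ^ 2 ∂P = 0 := le_antisymm (h.trans (mul_nonpos_of_nonneg_of_nonpos hc hv))
      (integral_nonneg fun ω => sq_nonneg (X ω))
    have hae := (integral_eq_zero_iff_of_nonneg (fun ω => sq_nonneg (X ω)) hX).1 h0
    refine (measure_mono_null (fun ω hω => ?_) (ae_iff.1 hae)).trans_le bot_le
    simp only [Set.mem_ofPred_eq, Real.sqrt_eq_zero'.2 hv, mul_zero, abs_pos] at hω ⊢
    simpa using hω
  · have hmarkov := mul_meas_ge_le_integral_of_nonneg
      (ae_of_all _ fun ω => sq_nonneg (X ω)) hX ((B * Real.sqrt v) ^ 2)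
    rw [mul_pow, Real.sq_sqrt hv.le] at hmarkov
    have hsub : {ω | B * Real.sqrt v < |X ω|} ⊆ {ω | B ^ 2 * v ≤ X ω ^ 2} := fun ω hω => by
      simp only [Set.mem_ofPred_eq] at hω ⊢
      rw [← sq_abs (X ω), ← Real.sq_sqrt hv.le, ← mul_pow]
      exact pow_le_pow_left₀ (by positivity) hω.le 2
    refine (measure_mono hsub).trans ?_
    rw [← ofReal_measureReal]
    refine ENNReal.ofReal_le_ofReal ?_
    rw [le_div_iff₀ (by positivity)]
    nlinarith

theorem multinomial_quadratic_rate_general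
    {Ω : Type*} [MeasurableSpace Ω] (P : Measure Ω) [IsProbabilityMeasure P]
    (M : ℕ → ℕ) (p : (n : ℕ) → Fin (M n) → ℝ) (α : (n : ℕ) → Fin (M n) → ℝ)
    (I : (n : ℕ) → Fin n → Ω → Fin (M n))
    (hmeas : ∀ n r, Measurable (I n r))
    (hIndep : ∀ n, iIndepFun (I n) P)
    (hLaw : ∀ n r m, P {ω | I n r ω = m} = ENNReal.ofReal (p n m))
    (hp : ∀ n m, 0 < p n m) (hpsum : ∀ n, ∑ m, p n m = 1)
    (N : (n : ℕ) → Fin (M n) → Ω → ℕ)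
    (hN : ∀ n m ω, N n m ω = (Finset.univ.filter fun r : Fin n => I n r ω = m).card)
    (s : ℕ → ℝ)
    (hs : ∀ n, s n = Real.sqrt (
      (2 / (n : ℝ) ^ 2) * ∑ m, (α n m) ^ 2 / (p n m) ^ 2 +
      (4 / (n : ℝ)) * ∑ m, p n m * (α n m / p n m - ∑ m', α n m') ^ 2)) :
    ∀ ε > 0, ∃ B > 0, ∀ᶠ n : ℕ in atTop,
      P {ω | B * (s n + ((∑ m, |α n m|) / Real.sqrt n)) < |∑ m, α n m *
          ((N n m ω : ℝ) * ((N n m ω : ℝ) - 1) /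
            ((n : ℝ) * ((n : ℝ) - 1) * (p n m) ^ 2) - 1)|}
        ≤ ENNReal.ofReal ε := by
  intro ε hε
  refine ⟨Real.sqrt (4 / ε), by positivity, ?_⟩
  filter_upwards [eventually_ge_atTop 2] with n hn
  have hJ : IsIIDSample P (I n) (p n) := ⟨hmeas n, hIndep n, hLaw n, fun m => (hp n m).le⟩
  have hmoment := hJ.integral_multinomialStat_sq_le (hp n) (hpsum n) (by simpa using hn) (α n)
  rw [Fintype.card_fin] at hmoment
  calc _ ≤ P {ω | Real.sqrt (4 / ε) * s n <
        |multinomialStat (p n) (α n) fun r => I n r ω|} := by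
        refine measure_mono (Set.ofPred_subset_ofPred.2 fun ω hω => ?_)
        simp only [multinomialStat, Fintype.card_fin, ← hN]
        refine lt_of_le_of_lt ?_ hω
        gcongr
        exact le_add_of_nonneg_right (by positivity)
    _ ≤ ENNReal.ofReal (4 / Real.sqrt (4 / ε) ^ 2) := by
        rw [hs n]
        exact measure_mul_sqrt_lt_abs_le_of_integral_sq_le
          (hJ.integrable_comp fun v => multinomialStat (p n) (α n) v ^ 2) (by norm_num)
          (by positivity) hmoment
    _ = ENNReal.ofReal ε := by
        rw [Real.sq_sqrt (by positivity)]
        field_simp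

/-- for multinomial `N_n` with `max_m p_{n,m} → 0` and
`liminf n·min_m p_{n,m} > 0`, the quadratic form
`Σ_m α_{n,m}(N_{n,m}(N_{n,m}−1)/(n(n−1)p_{n,m}²) − 1)` is `O_P(s_n + n^{−1/2} Σ_m |α_{n,m}|)`,
where `s_n² = (2/n²) Σ_m α_{n,m}²/p_{n,m}² + (4/n) Σ_m p_{n,m}(α_{n,m}/p_{n,m} − Σ_m α_{n,m})²`. -/
theorem multinomial_quadratic_rate
    {Ω : Type*} [MeasurableSpace Ω] (P : Measure Ω) [IsProbabilityMeasure P]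
    (M : ℕ → ℕ) (p : (n : ℕ) → Fin (M n) → ℝ) (α : (n : ℕ) → Fin (M n) → ℝ)
    (I : (n : ℕ) → Fin n → Ω → Fin (M n))
    (hmeas : ∀ n r, Measurable (I n r))
    (hIndep : ∀ n, iIndepFun (I n) P)
    (hLaw : ∀ n r m, P {ω | I n r ω = m} = ENNReal.ofReal (p n m))
    (hp : ∀ n m, 0 < p n m) (hpsum : ∀ n, ∑ m, p n m = 1)
    (hpmax : ∀ ε > 0, ∀ᶠ n : ℕ in atTop, ∀ m, p n m < ε)
    (hliminf : ∃ c > 0, ∀ᶠ n : ℕ in atTop, ∀ m, c ≤ (n : ℝ) * p n m)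
    (N : (n : ℕ) → Fin (M n) → Ω → ℕ)
    (hN : ∀ n m ω, N n m ω = (Finset.univ.filter fun r : Fin n => I n r ω = m).card)
    (s : ℕ → ℝ)
    (hs : ∀ n, s n = Real.sqrt (
      (2 / (n : ℝ) ^ 2) * ∑ m, (α n m) ^ 2 / (p n m) ^ 2 +
      (4 / (n : ℝ)) * ∑ m, p n m * (α n m / p n m - ∑ m', α n m') ^ 2)) :
    ∀ ε > 0, ∃ B > 0, ∀ᶠ n : ℕ in atTop,
      P {ω | B * (s n + ((∑ m, |α n m|) / Real.sqrt n)) < |∑ m, α n m *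
          ((N n m ω : ℝ) * ((N n m ω : ℝ) - 1) /
            ((n : ℝ) * ((n : ℝ) - 1) * (p n m) ^ 2) - 1)|}
        ≤ ENNReal.ofReal ε :=
  multinomial_quadratic_rate_general P M p α I hmeas hIndep hLaw hp hpsum N hN s hs
end

section
/- Let φ: ℝ → ℝ be bounded with ∫|φ| dλ = 1 and ∫φ² dλ < ∞, and let G be a probability measure on ℝ with bounded Lebesgue density g. Define K_σ(x₁,x₂) = σ⁻¹ φ((x₁−x₂)/σ). Then σ ∫∫ K_σ² d(G×G) → (∫ g² dλ)(∫ φ² dλ) as σ ↓ 0. -/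
/-!
Substituting `x₁ - x₂ = σ v` turns `σ ∫∫ K_σ² d(G×G)` into `∫ φ(v)² h(σ v) dv`, where
`h(t) = ∫ g(x) g(x - t) dx` is the autocorrelation of the density. As `g` is bounded and
integrable, `h` is bounded, and it is continuous by `L¹`-continuity of translation, so dominated
convergence gives the limit `h(0) ∫ φ² = (∫ g²)(∫ φ²)`.
-/

open MeasureTheory Filter Topology

section Translation

variable {G E : Type*} [AddGroup G] [TopologicalSpace G] [IsTopologicalAddGroup G]
  [MeasurableSpace G] [BorelSpace G] {μ : Measure G} [μ.IsAddRightInvariant]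
  [μ.InnerRegularCompactLTTop] [IsLocallyFiniteMeasure μ] [NormedAddCommGroup E]

theorem tendsto_integral_norm_comp_sub_sub {g : G → E} (hg : Integrable g μ) (s : G) :
    Tendsto (fun t => ∫ x, ‖g (x - t) - g (x - s)‖ ∂μ) (𝓝 s) (𝓝 0) := by
  let shift : C(G, C(G, G)) := (ContinuousMap.mk (fun p : G × G => p.2 - p.1) (by fun_prop)).curry
  have hshift (t : G) : MeasurePreserving (shift t) μ μ := measurePreserving_sub_right μ t
  let T : G → Lp E 1 μ := fun t => Lp.compMeasurePreserving (shift t) (hshift t) (hg.toL1 g)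
  have hT : Continuous T :=
    continuous_const.compMeasurePreservingLp shift.continuous hshift ENNReal.one_ne_top
  have hTae (t : G) : T t =ᵐ[μ] fun x => g (x - t) :=
    (Lp.coeFn_compMeasurePreserving _ _).trans
      (hg.coeFn_toL1.comp_tendsto (hshift t).quasiMeasurePreserving.tendsto_ae)
  have hdist (t : G) : dist (T t) (T s) = ∫ x, ‖g (x - t) - g (x - s)‖ ∂μ := by
    rw [L1.dist_eq_integral_dist]
    refine integral_congr_ae ?_
    filter_upwards [hTae t, hTae s] with x ht hs
    rw [ht, hs, dist_eq_norm]
  simpa only [hdist] using tendsto_iff_dist_tendsto_zero.1 (hT.tendsto s)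

theorem continuous_integral_mul_comp_sub {f g : G → ℝ} {C : ℝ} (hf : AEStronglyMeasurable f μ)
    (hfC : ∀ᵐ x ∂μ, ‖f x‖ ≤ C) (hg : Integrable g μ) :
    Continuous fun t => ∫ x, f x * g (x - t) ∂μ := by
  have hint (t : G) : Integrable (fun x => f x * g (x - t)) μ :=
    (hg.comp_sub_right t).bdd_mul hf hfC
  refine continuous_iff_continuousAt.2 fun s => ?_
  rw [ContinuousAt, tendsto_iff_dist_tendsto_zero]
  have hlim : Tendsto (fun t => C * ∫ x, ‖g (x - t) - g (x - s)‖ ∂μ) (𝓝 s) (𝓝 0) := by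
    simpa using (tendsto_integral_norm_comp_sub_sub hg s).const_mul C
  refine squeeze_zero (fun t => dist_nonneg) (fun t => ?_) hlim
  calc dist (∫ x, f x * g (x - t) ∂μ) (∫ x, f x * g (x - s) ∂μ)
      = ‖∫ x, f x * (g (x - t) - g (x - s)) ∂μ‖ := by
        simp only [dist_eq_norm, mul_sub, integral_sub (hint t) (hint s)]
    _ ≤ ∫ x, C * ‖g (x - t) - g (x - s)‖ ∂μ := by
        refine norm_integral_le_of_norm_le (((hg.comp_sub_right t).sub
          (hg.comp_sub_right s)).norm.const_mul C) ?_
        filter_upwards [hfC] with x hx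
        rw [norm_mul]
        exact mul_le_mul_of_nonneg_right hx (norm_nonneg _)
    _ = C * ∫ x, ‖g (x - t) - g (x - s)‖ ∂μ := integral_const_mul C _

end Translation

section Density

variable {α E : Type*} [MeasurableSpace α] {μ : Measure α} {g : α → ℝ}
  [NormedAddCommGroup E] [NormedSpace ℝ E]

theorem integrable_of_isFiniteMeasure_withDensity_ofReal (hg : AEStronglyMeasurable g μ)
    (hg0 : 0 ≤ᵐ[μ] g) [IsFiniteMeasure (μ.withDensity fun x => ENNReal.ofReal (g x))] :
    Integrable g μ := by
  refine ⟨hg, (hasFiniteIntegral_iff_ofReal hg0).2 ?_⟩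
  simpa using measure_lt_top (μ.withDensity fun x => ENNReal.ofReal (g x)) Set.univ

theorem integral_withDensity_ofReal (hg : Measurable g) (hg0 : 0 ≤ᵐ[μ] g) (f : α → E) :
    ∫ x, f x ∂μ.withDensity (fun x => ENNReal.ofReal (g x)) = ∫ x, g x • f x ∂μ := by
  rw [integral_withDensity_eq_integral_toReal_smul hg.ennreal_ofReal
    (ae_of_all _ fun _ => ENNReal.ofReal_lt_top)]
  refine integral_congr_ae ?_
  filter_upwards [hg0] with x hx
  rw [ENNReal.toReal_ofReal hx]

end Density

theorem tendsto_integral_mul_comp_smul_nhds_zero {E : Type*} [NormedAddCommGroup E]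
    [NormedSpace ℝ E] [MeasurableSpace E] [OpensMeasurableSpace E] {μ : Measure E}
    {ψ h : E → ℝ} {B : ℝ} (hψ : Integrable ψ μ) (hh : Continuous h) (hB : ∀ t, ‖h t‖ ≤ B) :
    Tendsto (fun σ : ℝ => ∫ v, ψ v * h (σ • v) ∂μ) (𝓝 0) (𝓝 ((∫ v, ψ v ∂μ) * h 0)) := by
  rw [← integral_mul_const]
  refine tendsto_integral_filter_of_dominated_convergence (fun v => ‖ψ v‖ * B)
    (Eventually.of_forall fun σ =>
      hψ.1.mul (hh.comp (continuous_const_smul σ)).aestronglyMeasurable)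
    (Eventually.of_forall fun σ => ae_of_all _ fun v => ?_) (hψ.norm.mul_const B)
    (ae_of_all _ fun v => ?_)
  · rw [norm_mul]
    exact mul_le_mul_of_nonneg_left (hB _) (norm_nonneg _)
  · have hσv : Tendsto (fun σ : ℝ => σ • v) (𝓝 0) (𝓝 0) := by
      simpa using (tendsto_id (x := 𝓝 (0 : ℝ))).smul_const v
    exact ((hh.tendsto 0).comp hσv).const_mul (ψ v)

noncomputable def autocorrelation (g : ℝ → ℝ) (t : ℝ) : ℝ := ∫ x, g x * g (x - t)

section Autocorrelation

variable {g ψ : ℝ → ℝ} {C : ℝ}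

theorem autocorrelation_zero (g : ℝ → ℝ) : autocorrelation g 0 = ∫ x, g x ^ 2 := by
  simp [autocorrelation, sq]

theorem norm_autocorrelation_le (hg : Integrable g) (hgC : ∀ x, ‖g x‖ ≤ C) (t : ℝ) :
    ‖autocorrelation g t‖ ≤ C * ∫ x, ‖g x‖ := by
  calc ‖autocorrelation g t‖ ≤ ∫ x, C * ‖g (x - t)‖ := by
        refine norm_integral_le_of_norm_le ((hg.comp_sub_right t).norm.const_mul C)
          (ae_of_all _ fun x => ?_)
        rw [norm_mul]
        exact mul_le_mul_of_nonneg_right (hgC x) (norm_nonneg _)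
    _ = C * ∫ x, ‖g x‖ := by
        rw [integral_const_mul, integral_sub_right_eq_self (fun x => ‖g x‖) t]

theorem continuous_autocorrelation (hg : Integrable g) (hgC : ∀ x, ‖g x‖ ≤ C) :
    Continuous (autocorrelation g) :=
  continuous_integral_mul_comp_sub hg.1 (ae_of_all _ hgC) hg

theorem integral_mul_comp_sub_div {σ : ℝ} (hσ : 0 < σ) (x : ℝ) :
    ∫ y, g y * ψ ((x - y) / σ) = σ * ∫ v, g (x - σ * v) * ψ v := by
  have hrescale : ∫ v, g (x - σ * v) * ψ v = σ⁻¹ * ∫ w, g (x - w) * ψ (w / σ) := by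
    simpa [mul_div_cancel_left₀ _ hσ.ne', abs_of_pos hσ] using
      Measure.integral_comp_mul_left (fun w => g (x - w) * ψ (w / σ)) σ
  have hreflect : ∫ w, g (x - w) * ψ (w / σ) = ∫ y, g y * ψ ((x - y) / σ) := by
    simpa only [sub_sub_cancel] using
      integral_sub_left_eq_self (fun y => g y * ψ ((x - y) / σ)) volume x
  rw [hrescale, hreflect, ← mul_assoc, mul_inv_cancel₀ hσ.ne', one_mul]

theorem integral_mul_integral_mul_comp_sub_div (hgm : Measurable g) (hg : Integrable g)
    (hgC : ∀ x, ‖g x‖ ≤ C) (hψ : Integrable ψ) {σ : ℝ} (hσ : 0 < σ) :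
    ∫ x, g x * ∫ y, g y * ψ ((x - y) / σ) = σ * ∫ v, ψ v * autocorrelation g (σ * v) := by
  have hF : Integrable (Function.uncurry fun x v => g x * (g (x - σ * v) * ψ v))
      ((volume : Measure ℝ).prod volume) := by
    refine ((hg.norm.const_mul C).mul_prod hψ.norm).mono' ?_ (ae_of_all _ fun p => ?_)
    · exact hg.1.comp_fst.mul
        ((hgm.comp (measurable_fst.sub (measurable_snd.const_mul σ))).aestronglyMeasurable.mul
          hψ.1.comp_snd)
    · simp only [Function.uncurry, norm_mul]
      calc ‖g p.1‖ * (‖g (p.1 - σ * p.2)‖ * ‖ψ p.2‖) ≤ ‖g p.1‖ * (C * ‖ψ p.2‖) := by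
            gcongr; exact hgC _
        _ = C * ‖g p.1‖ * ‖ψ p.2‖ := by ring
  calc ∫ x, g x * ∫ y, g y * ψ ((x - y) / σ)
      = ∫ x, σ * ∫ v, g x * (g (x - σ * v) * ψ v) := by
        congr 1 with x
        rw [integral_mul_comp_sub_div hσ, mul_left_comm, ← integral_const_mul]
    _ = σ * ∫ v, ∫ x, g x * (g (x - σ * v) * ψ v) := by
        rw [integral_const_mul, integral_integral_swap hF]
    _ = σ * ∫ v, ψ v * autocorrelation g (σ * v) := by
        congr 2 with v
        rw [autocorrelation, ← integral_const_mul]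
        congr 1 with x
        ring

end Autocorrelation

theorem convolution_kernel_l2_limit_general
    (φ : ℝ → ℝ)
    (hφ2 : Integrable fun x => φ x ^ 2)
    (g : ℝ → ℝ) (hgmeas : Measurable g) (hg0 : ∀ x, 0 ≤ g x)
    (hgbdd : ∃ Cg, ∀ x, g x ≤ Cg)
    (G : Measure ℝ) (hG : G = volume.withDensity fun x => ENNReal.ofReal (g x))
    (hGprob : IsProbabilityMeasure G) :
    Tendsto (fun σ : ℝ =>
        σ * ∫ x₁, ∫ x₂, (σ⁻¹ * φ ((x₁ - x₂) / σ)) ^ 2 ∂G ∂G)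
      (nhdsWithin 0 (Set.Ioi 0))
      (nhds ((∫ x, g x ^ 2) * ∫ v, φ v ^ 2)) := by
  obtain ⟨C, hC⟩ := hgbdd
  have hgC (x : ℝ) : ‖g x‖ ≤ C := by rw [Real.norm_of_nonneg (hg0 x)]; exact hC x
  have : IsFiniteMeasure (volume.withDensity fun x => ENNReal.ofReal (g x)) := hG ▸ inferInstance
  have hg : Integrable g :=
    integrable_of_isFiniteMeasure_withDensity_ofReal hgmeas.aestronglyMeasurable (ae_of_all _ hg0)
  have hrepr : ∀ σ ∈ Set.Ioi (0 : ℝ), ∫ v, φ v ^ 2 * autocorrelation g (σ • v) =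
      σ * ∫ x₁, ∫ x₂, (σ⁻¹ * φ ((x₁ - x₂) / σ)) ^ 2 ∂G ∂G := by
    intro σ (hσ : 0 < σ)
    simp only [hG, integral_withDensity_ofReal hgmeas (ae_of_all _ hg0), smul_eq_mul, mul_pow,
      mul_left_comm (g _) (σ⁻¹ ^ 2), integral_const_mul]
    rw [integral_mul_integral_mul_comp_sub_div hgmeas hg hgC hφ2 hσ]
    field_simp [hσ.ne']
  have hlim := tendsto_integral_mul_comp_smul_nhds_zero hφ2 (continuous_autocorrelation hg hgC)
    (norm_autocorrelation_le hg hgC)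
  rw [autocorrelation_zero, mul_comm] at hlim
  exact (hlim.mono_left nhdsWithin_le_nhds).congr' (eventually_nhdsWithin_of_forall hrepr)

/-- for bounded `φ` with `∫|φ| = 1`, `∫φ² < ∞` and a probability measure
`G` with bounded Lebesgue density `g`, the convolution kernel
`K_σ(x₁,x₂) = σ⁻¹ φ((x₁−x₂)/σ)` satisfies
`σ ∫∫ K_σ² d(G×G) → (∫ g² dλ)(∫ φ² dλ)` as `σ ↓ 0`. -/
theorem convolution_kernel_l2_limit
    (φ : ℝ → ℝ) (hφmeas : Measurable φ) (hφbdd : ∃ Cφ, ∀ x, |φ x| ≤ Cφ)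
    (hφ1 : ∫ x, |φ x| = 1) (hφ2 : Integrable fun x => φ x ^ 2)
    (g : ℝ → ℝ) (hgmeas : Measurable g) (hg0 : ∀ x, 0 ≤ g x)
    (hgbdd : ∃ Cg, ∀ x, g x ≤ Cg)
    (G : Measure ℝ) (hG : G = volume.withDensity fun x => ENNReal.ofReal (g x))
    (hGprob : IsProbabilityMeasure G) :
    Tendsto (fun σ : ℝ =>
        σ * ∫ x₁, ∫ x₂, (σ⁻¹ * φ ((x₁ - x₂) / σ)) ^ 2 ∂G ∂G)
      (nhdsWithin 0 (Set.Ioi 0))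
      (nhds ((∫ x, g x ^ 2) * ∫ v, φ v ^ 2)) :=
  convolution_kernel_l2_limit_general φ hφ2 g hgmeas hg0 hgbdd G hG hGprob
end
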